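/- The classical rational queer r-matrix r₁₂(u,v) = P₁₂/(u−v) + J₁J₂P₁₂/(u+v) satisfies the 'half' classical Yang-Baxter equation: r₁₂(u,v)r₂₃(v,w) − r₁₃(u,w)r₁₂(u,v) − r₂₃(v,w)r₁₃(u,w) = 0, for u−v, v−w, u−w, u+v, v+w, u+w nonzero. Consequently, since r is antisymmetric (r₁₂(u,v) = −r₂₁(v,u)), it satisfies the classical Yang-Baxter equation [r₁₂(u,v), r₁₃(u,w)] + [r₁₂(u,v), r₂₃(v,w)] + [r₁₃(u,w), r₂₃(v,w)] = 0. -/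

import Mathlib

open Matrix BigOperators

noncomputable section

/-- Index set `{±1,…,±N}`: `false` codes a positive index, `true` a negative one. -/
abbrev Idx (N : ℕ) := Bool × Fin N

/-- Parity: positive indices are even, negative indices are odd. -/
def pty {N : ℕ} (i : Idx N) : ℕ := if i.1 then 1 else 0

/-- The index `-i`. -/
def nneg {N : ℕ} (i : Idx N) : Idx N := (!i.1, i.2)

/-- Matrix unit `e_{ij}` in `End(ℂ^{N|N})`. -/
def Em {N : ℕ} (i j : Idx N) : Matrix (Idx N) (Idx N) ℂ := Matrix.single i j 1

/-- `J = Σ_i (-1)^{p_i} e_{i,-i}`. -/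
def Jmat (N : ℕ) : Matrix (Idx N) (Idx N) ℂ := ∑ i : Idx N, ((-1 : ℂ) ^ pty i) • Em i (nneg i)

abbrev M3 (N : ℕ) := Matrix (Idx N × Idx N × Idx N) (Idx N × Idx N × Idx N) ℂ

/-- Graded (Koszul-sign) Kronecker product of three homogeneous matrices acting on
`(ℂ^{N|N})^{⊗3}`; `db`, `dc` are the `ℤ₂`-degrees of `b` and `c`. -/
def gk3 {N : ℕ} (a b c : Matrix (Idx N) (Idx N) ℂ) (db dc : ℕ) : M3 N :=
  fun x y => (-1 : ℂ) ^ (db * pty y.1 + dc * (pty y.1 + pty y.2.1)) *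
    (a x.1 y.1 * (b x.2.1 y.2.1 * c x.2.2 y.2.2))

/-- Superpermutation `P₁₂ = Σ_{i,j} (-1)^{p_j} e_{ij} ⊗ e_{ji} ⊗ 1`. -/
def P12 (N : ℕ) : M3 N :=
  ∑ i : Idx N, ∑ j : Idx N, ((-1 : ℂ) ^ pty j) • gk3 (Em i j) (Em j i) 1 (pty i + pty j) 0

/-- Superpermutation `P₁₃ = Σ_{i,j} (-1)^{p_j} e_{ij} ⊗ 1 ⊗ e_{ji}`. -/
def P13 (N : ℕ) : M3 N :=
  ∑ i : Idx N, ∑ j : Idx N, ((-1 : ℂ) ^ pty j) • gk3 (Em i j) 1 (Em j i) 0 (pty i + pty j)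

/-- Superpermutation `P₂₃ = Σ_{i,j} (-1)^{p_j} 1 ⊗ e_{ij} ⊗ e_{ji}`. -/
def P23 (N : ℕ) : M3 N :=
  ∑ i : Idx N, ∑ j : Idx N,
    ((-1 : ℂ) ^ pty j) • gk3 1 (Em i j) (Em j i) (pty i + pty j) (pty i + pty j)

/-- `J` acting on the first tensor factor of `(ℂ^{N|N})^{⊗3}`. -/
def J1 (N : ℕ) : M3 N := gk3 (Jmat N) 1 1 0 0
/-- `J` acting on the second tensor factor (with Koszul signs). -/
def J2 (N : ℕ) : M3 N := gk3 1 (Jmat N) 1 1 0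
/-- `J` acting on the third tensor factor (with Koszul signs). -/
def J3 (N : ℕ) : M3 N := gk3 1 1 (Jmat N) 0 1

/-- The classical rational queer r-matrix on legs 1,2: `P₁₂/(u−v) + J₁J₂P₁₂/(u+v)`. -/
def rcl12 (N : ℕ) (u v : ℂ) : M3 N :=
  (u - v)⁻¹ • P12 N + (u + v)⁻¹ • (J1 N * J2 N * P12 N)

/-- The classical rational queer r-matrix on legs 1,3. -/
def rcl13 (N : ℕ) (u v : ℂ) : M3 N :=
  (u - v)⁻¹ • P13 N + (u + v)⁻¹ • (J1 N * J3 N * P13 N)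

/-- The classical rational queer r-matrix on legs 2,3. -/
def rcl23 (N : ℕ) (u v : ℂ) : M3 N :=
  (u - v)⁻¹ • P23 N + (u + v)⁻¹ • (J2 N * J3 N * P23 N)

abbrev T3 (N : ℕ) := Idx N × Idx N × Idx N
def mono {N : ℕ} (σ : T3 N → T3 N) (f : T3 N → ℂ) : M3 N :=
  fun x y => if y = σ x then f x else 0

theorem mono_mul {N : ℕ} (σ τ : T3 N → T3 N) (f g : T3 N → ℂ) :
    (mono σ f : M3 N) * mono τ g = mono (fun x => τ (σ x)) (fun x => f x * g (σ x)) := by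
  ext x y
  rw [Matrix.mul_apply, Finset.sum_eq_single (σ x)]
  · simp [mono]
  · intro b _ hb; simp [mono, hb]
  · simp

theorem sgn12 {N : ℕ} (i j : Idx N) :
    ((-1 : ℂ) ^ pty j) * (-1) ^ ((pty i + pty j) * pty j) = (-1) ^ (pty i * pty j) := by
  rcases i with ⟨bi, _⟩; rcases j with ⟨bj, _⟩
  cases bi <;> cases bj <;> simp [pty]

theorem P12_eq (N : ℕ) : P12 N = mono (fun x => (x.2.1, x.1, x.2.2))
    (fun x => (-1 : ℂ) ^ (pty x.1 * pty x.2.1)) := by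
  ext x y
  simp only [P12, Matrix.sum_apply, Matrix.smul_apply, gk3, Em, Matrix.single,
    Matrix.of_apply, Matrix.one_apply, mono, smul_eq_mul, ite_and, mul_ite, ite_mul,
    mul_zero, zero_mul, mul_one, Finset.sum_ite_eq, Finset.sum_ite_eq', Finset.mem_univ,
    if_true]
  rw [Finset.sum_eq_single (y.2.1 : Idx N)]
  · rw [Finset.sum_eq_single (y.1 : Idx N)]
    · rcases x with ⟨x1, x2, x3⟩
      rcases y with ⟨y1, y2, y3⟩
      simp only [Prod.mk.injEq]
      by_cases h1 : x3 = y3 <;> by_cases h2 : y1 = x2 <;> by_cases h3 : y2 = x1 <;>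
        simp_all [sgn12, eq_comm]
    · intro b _ hb; simp [hb]
    · simp
  · intro b _ hb; simp [hb]
  · simp

theorem P13_eq (N : ℕ) : P13 N = mono (fun x => (x.2.2, x.2.1, x.1))
    (fun x => (-1 : ℂ) ^ (pty x.1 * pty x.2.1 + pty x.1 * pty x.2.2 + pty x.2.1 * pty x.2.2)) := by
  ext x y
  simp only [P13, Matrix.sum_apply, Matrix.smul_apply, gk3, Em, Matrix.single,
    Matrix.of_apply, Matrix.one_apply, mono, smul_eq_mul, ite_and, mul_ite, ite_mul,
    mul_zero, zero_mul, mul_one, Finset.sum_ite_eq, Finset.sum_ite_eq', Finset.mem_univ,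
    if_true]
  by_cases h : y = (x.2.2, x.2.1, x.1)
  · rw [if_pos h]; subst h
    rcases x with ⟨⟨a1, i1⟩, ⟨a2, i2⟩, ⟨a3, i3⟩⟩
    cases a1 <;> cases a2 <;> cases a3 <;> simp [pty] <;> norm_num
  · rw [if_neg h]
    split_ifs <;> simp_all [Prod.ext_iff, eq_comm]

theorem P23_eq (N : ℕ) : P23 N = mono (fun x => (x.1, x.2.2, x.2.1))
    (fun x => (-1 : ℂ) ^ (pty x.2.1 * pty x.2.2)) := by
  ext x y
  simp only [P23, Matrix.sum_apply, Matrix.smul_apply, gk3, Em, Matrix.single,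
    Matrix.of_apply, Matrix.one_apply, mono, smul_eq_mul, ite_and, mul_ite, ite_mul,
    mul_zero, zero_mul, mul_one, Finset.sum_ite_eq, Finset.sum_ite_eq', Finset.mem_univ,
    if_true]
  by_cases h : y = (x.1, x.2.2, x.2.1)
  · rw [if_pos h]; subst h
    rcases x with ⟨⟨a1, i1⟩, ⟨a2, i2⟩, ⟨a3, i3⟩⟩
    cases a1 <;> cases a2 <;> cases a3 <;> simp [pty] <;> norm_num
  · rw [if_neg h]
    split_ifs <;> simp_all [Prod.ext_iff, eq_comm]

theorem Jmat_apply {N : ℕ} (i j : Idx N) :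
    Jmat N i j = if j = nneg i then (-1 : ℂ) ^ pty i else 0 := by
  simp only [Jmat, Matrix.sum_apply, Matrix.smul_apply, Em, Matrix.single,
    Matrix.of_apply, smul_eq_mul, ite_and, mul_ite, mul_one, mul_zero]
  rw [Finset.sum_eq_single (i : Idx N)]
  · simp [eq_comm]
  · intro b _ hb; simp [hb]
  · simp

theorem J1_eq (N : ℕ) : J1 N = mono (fun x => (nneg x.1, x.2.1, x.2.2))
    (fun x => (-1 : ℂ) ^ pty x.1) := by
  ext x y
  rcases x with ⟨x1, x2, x3⟩
  rcases y with ⟨y1, y2, y3⟩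
  simp only [J1, gk3, Matrix.one_apply, mono, Jmat_apply, Prod.mk.injEq]
  by_cases h1 : y1 = nneg x1 <;> by_cases h2 : x2 = y2 <;> by_cases h3 : x3 = y3 <;>
    simp_all [eq_comm]

theorem J2_eq (N : ℕ) : J2 N = mono (fun x => (x.1, nneg x.2.1, x.2.2))
    (fun x => (-1 : ℂ) ^ (pty x.1 + pty x.2.1)) := by
  ext x y
  rcases x with ⟨x1, x2, x3⟩
  rcases y with ⟨y1, y2, y3⟩
  simp only [J2, gk3, Matrix.one_apply, mono, Jmat_apply, Prod.mk.injEq]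
  by_cases h1 : x1 = y1 <;> by_cases h2 : y2 = nneg x2 <;> by_cases h3 : x3 = y3 <;>
    simp_all [eq_comm, pow_add]

theorem J3_eq (N : ℕ) : J3 N = mono (fun x => (x.1, x.2.1, nneg x.2.2))
    (fun x => (-1 : ℂ) ^ (pty x.1 + pty x.2.1 + pty x.2.2)) := by
  ext x y
  rcases x with ⟨x1, x2, x3⟩
  rcases y with ⟨y1, y2, y3⟩
  simp only [J3, gk3, Matrix.one_apply, mono, Jmat_apply, Prod.mk.injEq]
  by_cases h1 : x1 = y1 <;> by_cases h2 : x2 = y2 <;> by_cases h3 : y3 = nneg x3 <;>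
    simp_all [eq_comm, pow_add]

section prods
variable (N : ℕ)

theorem e1 : P13 N * P12 N = P12 N * P23 N := by
  simp only [P12_eq, P13_eq, P23_eq, J1_eq, J2_eq, J3_eq, mono_mul]
  ext ⟨⟨a1, i1⟩, ⟨a2, i2⟩, ⟨a3, i3⟩⟩ y
  cases a1 <;> cases a2 <;> cases a3 <;> simp [mono, pty, nneg] <;> norm_num

theorem e2 : P23 N * P13 N = P12 N * P23 N := by
  simp only [P12_eq, P13_eq, P23_eq, J1_eq, J2_eq, J3_eq, mono_mul]
  ext ⟨⟨a1, i1⟩, ⟨a2, i2⟩, ⟨a3, i3⟩⟩ y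
  cases a1 <;> cases a2 <;> cases a3 <;>
    simp [mono, pty, nneg, Matrix.neg_apply, apply_ite (fun z : ℂ => -z)] <;> norm_num

theorem e3 : (J1 N * J3 N * P13 N) * P12 N = P12 N * (J2 N * J3 N * P23 N) := by
  simp only [P12_eq, P13_eq, P23_eq, J1_eq, J2_eq, J3_eq, mono_mul]
  ext ⟨⟨a1, i1⟩, ⟨a2, i2⟩, ⟨a3, i3⟩⟩ y
  cases a1 <;> cases a2 <;> cases a3 <;>
    simp [mono, pty, nneg, Matrix.neg_apply, apply_ite (fun z : ℂ => -z)] <;> norm_num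

theorem e4 : (J2 N * J3 N * P23 N) * (J1 N * J3 N * P13 N) = P12 N * (J2 N * J3 N * P23 N) := by
  simp only [P12_eq, P13_eq, P23_eq, J1_eq, J2_eq, J3_eq, mono_mul]
  ext ⟨⟨a1, i1⟩, ⟨a2, i2⟩, ⟨a3, i3⟩⟩ y
  cases a1 <;> cases a2 <;> cases a3 <;>
    simp [mono, pty, nneg, Matrix.neg_apply, apply_ite (fun z : ℂ => -z)] <;> norm_num

theorem e5 : (J1 N * J3 N * P13 N) * (J1 N * J2 N * P12 N) = -((J1 N * J2 N * P12 N) * P23 N) := by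
  simp only [P12_eq, P13_eq, P23_eq, J1_eq, J2_eq, J3_eq, mono_mul]
  ext ⟨⟨a1, i1⟩, ⟨a2, i2⟩, ⟨a3, i3⟩⟩ y
  cases a1 <;> cases a2 <;> cases a3 <;>
    simp [mono, pty, nneg, Matrix.neg_apply, apply_ite (fun z : ℂ => -z)] <;> norm_num

theorem e6 : P23 N * (J1 N * J3 N * P13 N) = (J1 N * J2 N * P12 N) * P23 N := by
  simp only [P12_eq, P13_eq, P23_eq, J1_eq, J2_eq, J3_eq, mono_mul]
  ext ⟨⟨a1, i1⟩, ⟨a2, i2⟩, ⟨a3, i3⟩⟩ y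
  cases a1 <;> cases a2 <;> cases a3 <;>
    simp [mono, pty, nneg, Matrix.neg_apply, apply_ite (fun z : ℂ => -z)] <;> norm_num

theorem e7 : P13 N * (J1 N * J2 N * P12 N) = -((J1 N * J2 N * P12 N) * (J2 N * J3 N * P23 N)) := by
  simp only [P12_eq, P13_eq, P23_eq, J1_eq, J2_eq, J3_eq, mono_mul]
  ext ⟨⟨a1, i1⟩, ⟨a2, i2⟩, ⟨a3, i3⟩⟩ y
  cases a1 <;> cases a2 <;> cases a3 <;>
    simp [mono, pty, nneg, Matrix.neg_apply, apply_ite (fun z : ℂ => -z)] <;> norm_num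

theorem e8 : (J2 N * J3 N * P23 N) * P13 N = (J1 N * J2 N * P12 N) * (J2 N * J3 N * P23 N) := by
  simp only [P12_eq, P13_eq, P23_eq, J1_eq, J2_eq, J3_eq, mono_mul]
  ext ⟨⟨a1, i1⟩, ⟨a2, i2⟩, ⟨a3, i3⟩⟩ y
  cases a1 <;> cases a2 <;> cases a3 <;>
    simp [mono, pty, nneg, Matrix.neg_apply, apply_ite (fun z : ℂ => -z)] <;> norm_num

theorem f1 : P23 N * P12 N = P12 N * P13 N := by
  simp only [P12_eq, P13_eq, P23_eq, J1_eq, J2_eq, J3_eq, mono_mul]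
  ext ⟨⟨a1, i1⟩, ⟨a2, i2⟩, ⟨a3, i3⟩⟩ y
  cases a1 <;> cases a2 <;> cases a3 <;>
    simp [mono, pty, nneg, Matrix.neg_apply, apply_ite (fun z : ℂ => -z)] <;> norm_num

theorem f2 : P13 N * P23 N = P12 N * P13 N := by
  simp only [P12_eq, P13_eq, P23_eq, J1_eq, J2_eq, J3_eq, mono_mul]
  ext ⟨⟨a1, i1⟩, ⟨a2, i2⟩, ⟨a3, i3⟩⟩ y
  cases a1 <;> cases a2 <;> cases a3 <;>
    simp [mono, pty, nneg, Matrix.neg_apply, apply_ite (fun z : ℂ => -z)] <;> norm_num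

theorem f3 : (J2 N * J3 N * P23 N) * P12 N = P12 N * (J1 N * J3 N * P13 N) := by
  simp only [P12_eq, P13_eq, P23_eq, J1_eq, J2_eq, J3_eq, mono_mul]
  ext ⟨⟨a1, i1⟩, ⟨a2, i2⟩, ⟨a3, i3⟩⟩ y
  cases a1 <;> cases a2 <;> cases a3 <;>
    simp [mono, pty, nneg, Matrix.neg_apply, apply_ite (fun z : ℂ => -z)] <;> norm_num

theorem f4 : (J1 N * J3 N * P13 N) * (J2 N * J3 N * P23 N) = P12 N * (J1 N * J3 N * P13 N) := by
  simp only [P12_eq, P13_eq, P23_eq, J1_eq, J2_eq, J3_eq, mono_mul]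
  ext ⟨⟨a1, i1⟩, ⟨a2, i2⟩, ⟨a3, i3⟩⟩ y
  cases a1 <;> cases a2 <;> cases a3 <;>
    simp [mono, pty, nneg, Matrix.neg_apply, apply_ite (fun z : ℂ => -z)] <;> norm_num

theorem f5 : (J2 N * J3 N * P23 N) * (J1 N * J2 N * P12 N) = -((J1 N * J2 N * P12 N) * P13 N) := by
  simp only [P12_eq, P13_eq, P23_eq, J1_eq, J2_eq, J3_eq, mono_mul]
  ext ⟨⟨a1, i1⟩, ⟨a2, i2⟩, ⟨a3, i3⟩⟩ y
  cases a1 <;> cases a2 <;> cases a3 <;>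
    simp [mono, pty, nneg, Matrix.neg_apply, apply_ite (fun z : ℂ => -z)] <;> norm_num

theorem f6 : P13 N * (J2 N * J3 N * P23 N) = -((J1 N * J2 N * P12 N) * P13 N) := by
  simp only [P12_eq, P13_eq, P23_eq, J1_eq, J2_eq, J3_eq, mono_mul]
  ext ⟨⟨a1, i1⟩, ⟨a2, i2⟩, ⟨a3, i3⟩⟩ y
  cases a1 <;> cases a2 <;> cases a3 <;>
    simp [mono, pty, nneg, Matrix.neg_apply, apply_ite (fun z : ℂ => -z)] <;> norm_num

theorem f7 : P23 N * (J1 N * J2 N * P12 N) = -((J1 N * J2 N * P12 N) * (J1 N * J3 N * P13 N)) := by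
  simp only [P12_eq, P13_eq, P23_eq, J1_eq, J2_eq, J3_eq, mono_mul]
  ext ⟨⟨a1, i1⟩, ⟨a2, i2⟩, ⟨a3, i3⟩⟩ y
  cases a1 <;> cases a2 <;> cases a3 <;>
    simp [mono, pty, nneg, Matrix.neg_apply, apply_ite (fun z : ℂ => -z)] <;> norm_num

theorem f8 : (J1 N * J3 N * P13 N) * P23 N = -((J1 N * J2 N * P12 N) * (J1 N * J3 N * P13 N)) := by
  simp only [P12_eq, P13_eq, P23_eq, J1_eq, J2_eq, J3_eq, mono_mul]
  ext ⟨⟨a1, i1⟩, ⟨a2, i2⟩, ⟨a3, i3⟩⟩ y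
  cases a1 <;> cases a2 <;> cases a3 <;>
    simp [mono, pty, nneg, Matrix.neg_apply, apply_ite (fun z : ℂ => -z)] <;> norm_num

end prods

set_option maxHeartbeats 1600000 in
theorem half1 (N : ℕ) (u v w : ℂ)
    (huv : u - v ≠ 0) (hvw : v - w ≠ 0) (huw : u - w ≠ 0)
    (huv' : u + v ≠ 0) (hvw' : v + w ≠ 0) (huw' : u + w ≠ 0) :
    rcl12 N u v * rcl23 N v w - rcl13 N u w * rcl12 N u v -
        rcl23 N v w * rcl13 N u w = 0 := by
  rw [rcl12, rcl13, rcl23]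
  simp only [add_mul, mul_add, smul_mul_assoc, mul_smul_comm, smul_smul, smul_add, smul_neg,
    e1, e2, e3, e4, e5, e6, e7, e8]
  set a := (u - v)⁻¹ with ha
  set a' := (u + v)⁻¹ with ha'
  set b := (v - w)⁻¹ with hb
  set b' := (v + w)⁻¹ with hb'
  set c := (u - w)⁻¹ with hc
  set c' := (u + w)⁻¹ with hc'
  have k1 : b * a - a * c - c * b = 0 := by
    rw [ha, hb, hc]; field_simp; ring
  have k2 : b * a' + a' * c' - c' * b = 0 := by
    rw [ha', hb, hc']; field_simp; ring
  have k3 : b' * a - a * c' - c' * b' = 0 := by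
    rw [ha, hb', hc']; field_simp; ring
  have k4 : b' * a' + a' * c - c * b' = 0 := by
    rw [ha', hb', hc]; field_simp; ring
  have key : ∀ X1 X2 X3 X4 : M3 N,
      (b * a) • X1 + (b * a') • X2 + ((b' * a) • X3 + (b' * a') • X4) -
        ((a * c) • X1 + (a * c') • X3 + (-((a' * c) • X4) + -((a' * c') • X2))) -
        ((c * b) • X1 + (c * b') • X4 + ((c' * b) • X2 + (c' * b') • X3)) =
      (b * a - a * c - c * b) • X1 + (b * a' + a' * c' - c' * b) • X2 +
        ((b' * a - a * c' - c' * b') • X3 + (b' * a' + a' * c - c * b') • X4) := by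
    intro X1 X2 X3 X4
    simp only [sub_smul, add_smul, neg_smul]
    abel
  rw [key, k1, k2, k3, k4]
  simp

set_option maxHeartbeats 1600000 in
theorem half2 (N : ℕ) (u v w : ℂ)
    (huv : u - v ≠ 0) (hvw : v - w ≠ 0) (huw : u - w ≠ 0)
    (huv' : u + v ≠ 0) (hvw' : v + w ≠ 0) (huw' : u + w ≠ 0) :
    rcl12 N u v * rcl13 N u w - rcl23 N v w * rcl12 N u v +
        rcl13 N u w * rcl23 N v w = 0 := by
  rw [rcl12, rcl13, rcl23]
  simp only [add_mul, mul_add, smul_mul_assoc, mul_smul_comm, smul_smul, smul_add, smul_neg,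
    f1, f2, f3, f4, f5, f6, f7, f8]
  set a := (u - v)⁻¹ with ha
  set a' := (u + v)⁻¹ with ha'
  set b := (v - w)⁻¹ with hb
  set b' := (v + w)⁻¹ with hb'
  set c := (u - w)⁻¹ with hc
  set c' := (u + w)⁻¹ with hc'
  have k1 : c * a - a * b + b * c = 0 := by
    rw [ha, hb, hc]; field_simp; ring
  have k2 : c * a' + a' * b' - b' * c = 0 := by
    rw [ha', hb', hc]; field_simp; ring
  have k3 : c' * a - a * b' + b' * c' = 0 := by
    rw [ha, hb', hc']; field_simp; ring
  have k4 : c' * a' + a' * b - b * c' = 0 := by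
    rw [ha', hb, hc']; field_simp; ring
  have key : ∀ X1 X2 X3 X4 : M3 N,
      (c * a) • X1 + (c * a') • X2 + ((c' * a) • X3 + (c' * a') • X4) -
        ((a * b) • X1 + (a * b') • X3 + (-((a' * b) • X4) + -((a' * b') • X2))) +
        ((b * c) • X1 + -((b * c') • X4) + (-((b' * c) • X2) + (b' * c') • X3)) =
      (c * a - a * b + b * c) • X1 + (c * a' + a' * b' - b' * c) • X2 +
        ((c' * a - a * b' + b' * c') • X3 + (c' * a' + a' * b - b * c') • X4) := by
    intro X1 X2 X3 X4
    simp only [sub_smul, add_smul, neg_smul]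
    abel
  rw [key, k1, k2, k3, k4]
  simp

/-- The classical rational queer r-matrix satisfies the "half" classical Yang–Baxter
equation, and consequently the classical Yang–Baxter equation. -/
theorem classical_queer_rmatrix (N : ℕ) (u v w : ℂ)
    (huv : u - v ≠ 0) (hvw : v - w ≠ 0) (huw : u - w ≠ 0)
    (huv' : u + v ≠ 0) (hvw' : v + w ≠ 0) (huw' : u + w ≠ 0) :
    (rcl12 N u v * rcl23 N v w - rcl13 N u w * rcl12 N u v -
        rcl23 N v w * rcl13 N u w = 0) ∧
    ((rcl12 N u v * rcl13 N u w - rcl13 N u w * rcl12 N u v) +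
        (rcl12 N u v * rcl23 N v w - rcl23 N v w * rcl12 N u v) +
        (rcl13 N u w * rcl23 N v w - rcl23 N v w * rcl13 N u w) = 0) := by
  refine ⟨half1 N u v w huv hvw huw huv' hvw' huw', ?_⟩
  have h1 := half1 N u v w huv hvw huw huv' hvw' huw'
  have h2 := half2 N u v w huv hvw huw huv' hvw' huw'
  have key : (rcl12 N u v * rcl13 N u w - rcl13 N u w * rcl12 N u v) +
      (rcl12 N u v * rcl23 N v w - rcl23 N v w * rcl12 N u v) +
      (rcl13 N u w * rcl23 N v w - rcl23 N v w * rcl13 N u w) =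
      (rcl12 N u v * rcl23 N v w - rcl13 N u w * rcl12 N u v -
        rcl23 N v w * rcl13 N u w) +
      (rcl12 N u v * rcl13 N u w - rcl23 N v w * rcl12 N u v +
        rcl13 N u w * rcl23 N v w) := by
    abel
  rw [key, h1, h2, add_zero]
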